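/- arXiv:2412.07092 — 7 statements merged into one kernel-verified Lean document; each statement's English description precedes it below -/
import Mathlib

section
/- Let (ℝ^k, δ) be a sublinear diversity (δ vanishes exactly on sets of size ≤ 1, is monotone, and satisfies δ(λA)=λδ(A), δ(A+B) ≤ δ(A)+δ(B)). Then N(x) := δ({0,x}) is a norm on ℝ^k. -/
open Pointwise

theorem stmt_8 {k : ℕ} (δ : Finset (Fin k → ℝ) → ℝ)
    (hnn : ∀ A : Finset (Fin k → ℝ), 0 ≤ δ A)
    (hzero : ∀ A : Finset (Fin k → ℝ), δ A = 0 ↔ A.card ≤ 1)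
    (hmono : ∀ A B : Finset (Fin k → ℝ), A ⊆ B → δ A ≤ δ B)
    (hhom : ∀ (A : Finset (Fin k → ℝ)) (lam : ℝ), A.Nonempty → 0 ≤ lam →
      δ (lam • A) = lam * δ A)
    (hsub : ∀ A B : Finset (Fin k → ℝ), A.Nonempty → B.Nonempty →
      δ (A + B) ≤ δ A + δ B) :
    (∀ x y : Fin k → ℝ, δ {0, x + y} ≤ δ {0, x} + δ {0, y}) ∧
    (∀ (x : Fin k → ℝ) (lam : ℝ), δ {0, lam • x} = |lam| * δ {0, x}) ∧
    (∀ x : Fin k → ℝ, δ {0, x} = 0 ↔ x = 0) := by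
  have hsing : ∀ a : Fin k → ℝ, δ {a} = 0 := fun a => (hzero {a}).2 (by simp)
  have hpos : ∀ x : Fin k → ℝ, ∀ lam : ℝ, 0 ≤ lam →
      δ {0, lam • x} = lam * δ {0, x} := by
    intro x lam hlam
    have h1 : lam • ({0, x} : Finset (Fin k → ℝ)) = {0, lam • x} := by
      rw [Finset.smul_finset_insert, Finset.smul_finset_singleton, smul_zero]
    rw [← h1, hhom _ _ ⟨0, by simp⟩ hlam]
  have hneg : ∀ x : Fin k → ℝ, δ {0, -x} ≤ δ {0, x} := by
    intro x
    have h1 : ({0, x} : Finset (Fin k → ℝ)) + {-x} = {0, -x} := by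
      ext a
      simp only [Finset.mem_add, Finset.mem_insert, Finset.mem_singleton]
      constructor
      · rintro ⟨u, (rfl | rfl), v, rfl, rfl⟩ <;> simp
      · rintro (rfl | rfl)
        · exact ⟨x, Or.inr rfl, -x, rfl, by simp⟩
        · exact ⟨0, Or.inl rfl, -x, rfl, by simp⟩
    calc δ {0, -x} = δ (({0, x} : Finset (Fin k → ℝ)) + {-x}) := by rw [h1]
      _ ≤ δ {0, x} + δ {-x} := hsub _ _ ⟨0, by simp⟩ ⟨-x, by simp⟩
      _ = δ {0, x} := by rw [hsing, add_zero]
  have hnegeq : ∀ x : Fin k → ℝ, δ {0, -x} = δ {0, x} := by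
    intro x
    refine le_antisymm (hneg x) ?_
    have := hneg (-x)
    rwa [neg_neg] at this
  refine ⟨?_, ?_, ?_⟩
  · intro x y
    have hss : ({0, x + y} : Finset (Fin k → ℝ)) ⊆ {0, x} + {0, y} := by
      intro a ha
      simp only [Finset.mem_insert, Finset.mem_singleton] at ha
      rcases ha with rfl | rfl
      · simpa using Finset.add_mem_add (Finset.mem_insert_self (α := Fin k → ℝ) 0 {x})
          (Finset.mem_insert_self (α := Fin k → ℝ) 0 {y})
      · exact Finset.add_mem_add (by simp) (by simp)
    calc δ {0, x + y} ≤ δ (({0, x} : Finset (Fin k → ℝ)) + {0, y}) := hmono _ _ hss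
      _ ≤ δ {0, x} + δ {0, y} := hsub _ _ ⟨0, by simp⟩ ⟨0, by simp⟩
  · intro x lam
    rcases le_or_gt 0 lam with h | h
    · rw [hpos x lam h, abs_of_nonneg h]
    · have hx : lam • x = (-lam) • (-x) := by simp
      rw [hx, hpos (-x) (-lam) (by linarith), hnegeq, abs_of_neg h]
  · intro x
    rw [hzero]
    constructor
    · intro h
      by_contra hx
      have : ({0, x} : Finset (Fin k → ℝ)).card = 2 := by
        rw [Finset.card_insert_of_notMem (by simpa using fun h' => hx h'.symm),
          Finset.card_singleton]
      omega
    · rintro rfl; simp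
end

section
/- Let (ℝ^k, δ) be a sublinear diversity. For all finite A ⊆ ℝ^k with |A| > 2, δ(A) ≤ ((|A|−1)/(|A|(|A|−2))) · Σ_{a ∈ A} δ(A \ {a}). -/
/-!
Put `n = #A` and let `S = ∑_{a ∈ A} (A \ {a})` be the Minkowski sum. For `b ≠ c` in `A` the point
`(n - 1) b + c` lies in `S` (pick `c` from the summand `A \ {b}` and `b` from all the others).
Adding these points over the `n - 1` choices of `c` puts `n (n - 2) b + ∑ A` in the `(n - 1)`-fold
sum of `S`, for every `b ∈ A`. So a translate of `n (n - 2) A` lies in `(n - 1) S`, and homogeneity,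
translation invariance, monotonicity and subadditivity give
`n (n - 2) δ(A) ≤ (n - 1) δ(S) ≤ (n - 1) ∑_a δ(A \ {a})`.
-/

open Pointwise

theorem Finset.sum_mem_sum {ι α : Type*} [AddCommMonoid α] [DecidableEq α] (s : Finset ι)
    (f : ι → Finset α) (g : ι → α) (hg : ∀ i ∈ s, g i ∈ f i) : ∑ i ∈ s, g i ∈ ∑ i ∈ s, f i := by
  rw [← Finset.mem_coe, Finset.coe_sum]
  exact Set.finsetSum_mem_finsetSum s _ g hg

open Finset

section MinkowskiSum

variable {V : Type*} [AddCommMonoid V] [DecidableEq V] {A : Finset V} {b : V}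

theorem nsmul_add_mem_sum_erase (hb : b ∈ A) {c : V} (hc : c ∈ A.erase b) :
    (#A - 1) • b + c ∈ ∑ a ∈ A, A.erase a := by
  have hsum : ∑ a ∈ A, Function.update (fun _ ↦ b) b c a = (#A - 1) • b + c := by
    rw [← add_sum_erase A _ hb,
      sum_congr rfl fun a ha ↦ Function.update_of_ne (ne_of_mem_erase ha) .., sum_const,
      card_erase_of_mem hb, Function.update_self, add_comm]
  refine hsum ▸ sum_mem_sum A _ _ fun a ha ↦ ?_
  rcases eq_or_ne a b with rfl | hab
  · simpa using hc
  · simpa [hab] using mem_erase.2 ⟨hab.symm, hb⟩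

theorem nsmul_add_sum_mem_nsmul_sum_erase (hb : b ∈ A) (hA : 2 ≤ #A) :
    (#A * (#A - 2)) • b + ∑ a ∈ A, a ∈ (#A - 1) • ∑ a ∈ A, A.erase a := by
  obtain ⟨m, hm⟩ := Nat.exists_eq_add_of_le' hA
  have hsum : ∑ c ∈ A.erase b, ((#A - 1) • b + c) = (#A * (#A - 2)) • b + ∑ a ∈ A, a := by
    rw [sum_add_distrib, sum_const, card_erase_of_mem hb, ← add_sum_erase A _ hb, ← add_assoc,
      smul_smul, ← succ_nsmul, hm]
    congr 2
    rw [show m + 2 - 1 = m + 1 by omega, Nat.add_sub_cancel]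
    ring
  rw [← card_erase_of_mem hb, ← sum_const, ← hsum]
  exact sum_mem_sum _ _ _ fun c hc ↦ nsmul_add_mem_sum_erase hb hc

end MinkowskiSum

section Diversity

variable {V : Type*} [AddCommGroup V] [DecidableEq V] {δ : Finset V → ℝ}

theorem diversity_sum_le
    (hsub : ∀ A B : Finset V, A.Nonempty → B.Nonempty → δ (A + B) ≤ δ A + δ B)
    {ι : Type*} {s : Finset ι} (hs : s.Nonempty) (f : ι → Finset V)
    (hf : ∀ i ∈ s, (f i).Nonempty) : δ (∑ i ∈ s, f i) ≤ ∑ i ∈ s, δ (f i) :=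
  le_sum_nonempty_of_subadditive_on_pred δ Finset.Nonempty hsub (fun _ _ ↦ .add) f s hs hf

theorem diversity_nsmul_le
    (hsub : ∀ A B : Finset V, A.Nonempty → B.Nonempty → δ (A + B) ≤ δ A + δ B)
    {A : Finset V} (hA : A.Nonempty) {n : ℕ} (hn : n ≠ 0) : δ (n • A) ≤ n * δ A := by
  simpa using diversity_sum_le hsub (s := range n) (by simpa) (fun _ ↦ A) fun _ _ ↦ hA

theorem diversity_le_add_singleton (hsingle : ∀ x : V, δ {x} = 0)
    (hsub : ∀ A B : Finset V, A.Nonempty → B.Nonempty → δ (A + B) ≤ δ A + δ B)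
    {A : Finset V} (hA : A.Nonempty) (x : V) : δ A ≤ δ (A + {x}) := by
  have h := hsub (A + {x}) {-x} (hA.add (singleton_nonempty x)) (singleton_nonempty _)
  rwa [hsingle, add_zero, add_assoc, singleton_add_singleton, add_neg_cancel, singleton_zero,
    add_zero] at h

variable [Module ℝ V]

theorem card_mul_diversity_le (hsingle : ∀ x : V, δ {x} = 0)
    (hmono : ∀ A B : Finset V, A ⊆ B → δ A ≤ δ B)
    (hhom : ∀ (A : Finset V) (lam : ℝ), A.Nonempty → 0 ≤ lam → δ (lam • A) = lam * δ A)
    (hsub : ∀ A B : Finset V, A.Nonempty → B.Nonempty → δ (A + B) ≤ δ A + δ B)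
    {A : Finset V} (hA : 2 ≤ #A) :
    (#A * (#A - 2) : ℝ) * δ A ≤ (#A - 1) * ∑ a ∈ A, δ (A.erase a) := by
  obtain ⟨b, hb⟩ : A.Nonempty := card_pos.1 (by omega)
  have herase : ∀ a ∈ A, (A.erase a).Nonempty := fun a ha ↦
    card_pos.1 (by rw [card_erase_of_mem ha]; omega)
  set S := ∑ a ∈ A, A.erase a
  obtain ⟨c, hc⟩ := herase b hb
  have hS : S.Nonempty := ⟨_, nsmul_add_mem_sum_erase hb hc⟩
  have hincl : ((#A * (#A - 2) : ℕ) : ℝ) • A + {∑ a ∈ A, a} ⊆ (#A - 1) • S := by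
    intro x hx
    obtain ⟨_, hy, _, hz, rfl⟩ := mem_add.1 hx
    obtain ⟨a, ha, rfl⟩ := mem_smul_finset.1 hy
    rw [mem_singleton.1 hz, Nat.cast_smul_eq_nsmul]
    exact nsmul_add_sum_mem_nsmul_sum_erase ha hA
  have hcoef : ((#A * (#A - 2) : ℕ) : ℝ) = #A * (#A - 2) := by push_cast [Nat.cast_sub hA]; ring
  calc (#A * (#A - 2) : ℝ) * δ A
      = δ (((#A * (#A - 2) : ℕ) : ℝ) • A) := by rw [hhom _ _ ⟨b, hb⟩ (by positivity), hcoef]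
    _ ≤ δ (((#A * (#A - 2) : ℕ) : ℝ) • A + {∑ a ∈ A, a}) :=
        diversity_le_add_singleton hsingle hsub (.smul_finset ⟨b, hb⟩) _
    _ ≤ δ ((#A - 1) • S) := hmono _ _ hincl
    _ ≤ ((#A - 1 : ℕ) : ℝ) * δ S := diversity_nsmul_le hsub hS (by omega)
    _ ≤ (#A - 1) * ∑ a ∈ A, δ (A.erase a) := by
        rw [Nat.cast_sub (by omega), Nat.cast_one]
        gcongr
        · exact sub_nonneg.2 (Nat.one_le_cast.2 (by omega))
        · exact diversity_sum_le hsub ⟨b, hb⟩ _ herase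

end Diversity

theorem stmt_9_general {k : ℕ} (δ : Finset (Fin k → ℝ) → ℝ)
    (hzero : ∀ A : Finset (Fin k → ℝ), δ A = 0 ↔ A.card ≤ 1)
    (hmono : ∀ A B : Finset (Fin k → ℝ), A ⊆ B → δ A ≤ δ B)
    (hhom : ∀ (A : Finset (Fin k → ℝ)) (lam : ℝ), A.Nonempty → 0 ≤ lam →
      δ (lam • A) = lam * δ A)
    (hsub : ∀ A B : Finset (Fin k → ℝ), A.Nonempty → B.Nonempty →
      δ (A + B) ≤ δ A + δ B) :
    ∀ A : Finset (Fin k → ℝ), 2 < A.card →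
      δ A ≤ ((A.card : ℝ) - 1) / ((A.card : ℝ) * ((A.card : ℝ) - 2)) *
        ∑ a ∈ A, δ (A.erase a) := by
  intro A hA
  have hsingle : ∀ x, δ {x} = 0 := fun x ↦ (hzero {x}).2 (card_singleton x).le
  have hpos : (0 : ℝ) < #A * (#A - 2) := by
    have : (2 : ℝ) < #A := by exact_mod_cast hA
    nlinarith
  rw [div_mul_eq_mul_div, le_div_iff₀ hpos, mul_comm]
  exact card_mul_diversity_le hsingle hmono hhom hsub hA.le

theorem stmt_9 {k : ℕ} (δ : Finset (Fin k → ℝ) → ℝ)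
    (hnn : ∀ A : Finset (Fin k → ℝ), 0 ≤ δ A)
    (hzero : ∀ A : Finset (Fin k → ℝ), δ A = 0 ↔ A.card ≤ 1)
    (hmono : ∀ A B : Finset (Fin k → ℝ), A ⊆ B → δ A ≤ δ B)
    (hhom : ∀ (A : Finset (Fin k → ℝ)) (lam : ℝ), A.Nonempty → 0 ≤ lam →
      δ (lam • A) = lam * δ A)
    (hsub : ∀ A B : Finset (Fin k → ℝ), A.Nonempty → B.Nonempty →
      δ (A + B) ≤ δ A + δ B) :
    ∀ A : Finset (Fin k → ℝ), 2 < A.card →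
      δ A ≤ ((A.card : ℝ) - 1) / ((A.card : ℝ) * ((A.card : ℝ) - 2)) *
        ∑ a ∈ A, δ (A.erase a) :=
  stmt_9_general δ hzero hmono hhom hsub
end

section
/- Let (ℝ^k, δ) be a sublinear semidiversity and P the orthogonal projection onto null(δ)^⊥. Then δ(A) = δ(P(A)) for all finite A ⊆ ℝ^k, where P(A) = {P(a) : a ∈ A}. -/
/-!
Every vector of the null space `N` has diversity zero with `0`, so by subadditivity and
monotonicity any finite set `Q ∪ {0}` with `Q ⊆ N` has diversity zero. Since `a - P a ∈ N`,
we have `A ⊆ P(A) + Q` and `P(A) ⊆ A + Q'` with such null sets `Q, Q'`, whence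
`δ A ≤ δ (P A)` and `δ (P A) ≤ δ A`.
-/

open Pointwise
open scoped Classical

section Diversity

variable {G : Type*} [AddCommGroup G] [DecidableEq G] {δ : Finset G → ℝ}

theorem insert_zero_insert_subset_pair_add (q : G) (Q : Finset G) :
    insert 0 (insert q Q) ⊆ ({0, q} : Finset G) + insert 0 Q := by
  rw [Finset.insert_comm]
  refine Finset.insert_subset ?_ (Finset.subset_add_right _ (by simp))
  simpa using Finset.add_mem_add (by simp : q ∈ ({0, q} : Finset G)) (Finset.mem_insert_self 0 Q)

theorem diversity_insert_zero_eq_zero (hnn : ∀ A, 0 ≤ δ A)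
    (hzero : ∀ A : Finset G, A.card ≤ 1 → δ A = 0)
    (hmono : ∀ A B : Finset G, A ⊆ B → δ A ≤ δ B)
    (hsub : ∀ A B : Finset G, A.Nonempty → B.Nonempty → δ (A + B) ≤ δ A + δ B)
    {Q : Finset G} (hQ : ∀ q ∈ Q, δ {0, q} = 0) : δ (insert 0 Q) = 0 := by
  induction Q using Finset.induction_on with
  | empty => exact hzero {0} (by simp)
  | @insert q Q _ ih =>
    have hq : δ {0, q} = 0 := hQ q (Finset.mem_insert_self q Q)
    have hrest : δ (insert 0 Q) = 0 := ih fun x hx => hQ x (Finset.mem_insert_of_mem hx)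
    have := calc
      δ (insert 0 (insert q Q)) ≤ δ (({0, q} : Finset G) + insert 0 Q) :=
        hmono _ _ (insert_zero_insert_subset_pair_add q Q)
      _ ≤ δ {0, q} + δ (insert 0 Q) := hsub _ _ (by simp) (by simp)
    linarith [hnn (insert 0 (insert q Q))]

theorem diversity_le_of_subset_add_insert_zero
    (hmono : ∀ A B : Finset G, A ⊆ B → δ A ≤ δ B)
    (hsub : ∀ A B : Finset G, A.Nonempty → B.Nonempty → δ (A + B) ≤ δ A + δ B)
    {A B Q : Finset G} (hB : B.Nonempty) (hQ : δ (insert 0 Q) = 0) (hA : A ⊆ B + insert 0 Q) :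
    δ A ≤ δ B := by
  have := (hmono _ _ hA).trans (hsub _ _ hB (Finset.insert_nonempty 0 Q))
  linarith

theorem diversity_image_eq_of_sub_mem (hnn : ∀ A, 0 ≤ δ A)
    (hzero : ∀ A : Finset G, A.card ≤ 1 → δ A = 0)
    (hmono : ∀ A B : Finset G, A ⊆ B → δ A ≤ δ B)
    (hsub : ∀ A B : Finset G, A.Nonempty → B.Nonempty → δ (A + B) ≤ δ A + δ B)
    {N : AddSubgroup G} (hN : ∀ x ∈ N, δ {0, x} = 0) {f : G → G} (hf : ∀ a, a - f a ∈ N)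
    (A : Finset G) : δ (A.image f) = δ A := by
  rcases A.eq_empty_or_nonempty with rfl | hA
  · simp
  have hnull : ∀ g : G → G, (∀ a, g a ∈ N) → δ (insert 0 (A.image g)) = 0 := fun g hg =>
    diversity_insert_zero_eq_zero hnn hzero hmono hsub (by simpa using fun a _ => hN _ (hg a))
  have hle : δ A ≤ δ (A.image f) := by
    refine diversity_le_of_subset_add_insert_zero hmono hsub (hA.image f) (hnull _ hf) ?_
    intro a ha
    simpa using Finset.add_mem_add (Finset.mem_image_of_mem f ha)
      (Finset.mem_insert_of_mem (Finset.mem_image_of_mem (fun a => a - f a) ha))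
  have hge : δ (A.image f) ≤ δ A := by
    refine diversity_le_of_subset_add_insert_zero hmono hsub hA
      (hnull (fun a => f a - a) fun a => by simpa using N.neg_mem (hf a)) ?_
    intro _ hx
    obtain ⟨a, ha, rfl⟩ := Finset.mem_image.mp hx
    simpa using Finset.add_mem_add ha
      (Finset.mem_insert_of_mem (Finset.mem_image_of_mem (fun a => f a - a) ha))
  exact le_antisymm hge hle

end Diversity

theorem stmt_11_general {k : ℕ} (δ : Finset (EuclideanSpace ℝ (Fin k)) → ℝ)
    (hnn : ∀ A, 0 ≤ δ A)
    (hzero : ∀ A : Finset (EuclideanSpace ℝ (Fin k)), A.card ≤ 1 → δ A = 0)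
    (hmono : ∀ A B : Finset (EuclideanSpace ℝ (Fin k)), A ⊆ B → δ A ≤ δ B)
    (hsub : ∀ A B : Finset (EuclideanSpace ℝ (Fin k)), A.Nonempty → B.Nonempty →
      δ (A + B) ≤ δ A + δ B)
    (N : Submodule ℝ (EuclideanSpace ℝ (Fin k)))
    (hN : (N : Set (EuclideanSpace ℝ (Fin k))) = {x | δ {0, x} = 0}) :
    ∀ A : Finset (EuclideanSpace ℝ (Fin k)),
      δ (A.image (fun a => (Submodule.orthogonalProjectionOnto Nᗮ a : EuclideanSpace ℝ (Fin k)))) = δ A := by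
  refine diversity_image_eq_of_sub_mem hnn hzero hmono hsub (N := N.toAddSubgroup)
    (fun x hx => show x ∈ {x | δ {0, x} = 0} from hN ▸ hx) fun a => ?_
  have h := Submodule.sub_starProjection_mem_orthogonal (K := Nᗮ) a
  rwa [Submodule.orthogonal_orthogonal] at h

theorem stmt_11 {k : ℕ} (δ : Finset (EuclideanSpace ℝ (Fin k)) → ℝ)
    (hnn : ∀ A, 0 ≤ δ A)
    (hzero : ∀ A : Finset (EuclideanSpace ℝ (Fin k)), A.card ≤ 1 → δ A = 0)
    (hmono : ∀ A B : Finset (EuclideanSpace ℝ (Fin k)), A ⊆ B → δ A ≤ δ B)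
    (hhom : ∀ (A : Finset (EuclideanSpace ℝ (Fin k))) (lam : ℝ), A.Nonempty → 0 ≤ lam →
      δ (lam • A) = lam * δ A)
    (hsub : ∀ A B : Finset (EuclideanSpace ℝ (Fin k)), A.Nonempty → B.Nonempty →
      δ (A + B) ≤ δ A + δ B)
    (N : Submodule ℝ (EuclideanSpace ℝ (Fin k)))
    (hN : (N : Set (EuclideanSpace ℝ (Fin k))) = {x | δ {0, x} = 0}) :
    ∀ A : Finset (EuclideanSpace ℝ (Fin k)),
      δ (A.image (fun a => (Submodule.orthogonalProjectionOnto Nᗮ a : EuclideanSpace ℝ (Fin k)))) = δ A :=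
  stmt_11_general δ hnn hzero hmono hsub N hN
end

section
/- Let (ℝ^k, δ) be a sublinear diversity. If conv(A) = conv(B) for finite A, B ⊆ ℝ^k, then δ(A) = δ(B). -/
open Pointwise

section Aux

variable {k : ℕ}

/-- Membership in a pointwise sum of finsets. -/
lemma aux_mem_sum {ι : Type*} (s : Finset ι) (f : ι → Finset (Fin k → ℝ)) (g : ι → (Fin k → ℝ))
    (h : ∀ i ∈ s, g i ∈ f i) : (∑ i ∈ s, g i) ∈ ∑ i ∈ s, f i := by
  classical
  induction s using Finset.cons_induction with
  | empty => simpa using Finset.zero_mem_zero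
  | cons a s ha ih =>
    rw [Finset.sum_cons, Finset.sum_cons]
    exact Finset.add_mem_add (h a (Finset.mem_cons_self a s))
      (ih fun i hi => h i (Finset.mem_cons_of_mem hi))

/-- A pointwise sum of nonempty finsets is nonempty. -/
lemma aux_sum_nonempty {ι : Type*} (s : Finset ι) (f : ι → Finset (Fin k → ℝ))
    (h : ∀ i ∈ s, (f i).Nonempty) : (∑ i ∈ s, f i).Nonempty := by
  classical
  induction s using Finset.cons_induction with
  | empty => exact ⟨0, by simpa using Finset.zero_mem_zero⟩
  | cons a s ha ih =>
    rw [Finset.sum_cons]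
    exact (h a (Finset.mem_cons_self a s)).add
      (ih fun i hi => h i (Finset.mem_cons_of_mem hi))

variable (δ : Finset (Fin k → ℝ) → ℝ)
    (hnn : ∀ A : Finset (Fin k → ℝ), 0 ≤ δ A)
    (hzero : ∀ A : Finset (Fin k → ℝ), δ A = 0 ↔ A.card ≤ 1)
    (hmono : ∀ A B : Finset (Fin k → ℝ), A ⊆ B → δ A ≤ δ B)
    (hhom : ∀ (A : Finset (Fin k → ℝ)) (lam : ℝ), A.Nonempty → 0 ≤ lam →
      δ (lam • A) = lam * δ A)
    (hsub : ∀ A B : Finset (Fin k → ℝ), A.Nonempty → B.Nonempty →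
      δ (A + B) ≤ δ A + δ B)

include hzero hhom hsub in
/-- Subadditivity over a weighted pointwise sum. -/
lemma aux_delta_sum_le (A : Finset (Fin k → ℝ)) (hA : A.Nonempty) (s : Finset (Fin k → ℝ)) (w : (Fin k → ℝ) → ℝ)
    (hw : ∀ a ∈ s, 0 ≤ w a) :
    δ (∑ a ∈ s, w a • A) ≤ (∑ a ∈ s, w a) * δ A := by
  classical
  induction s using Finset.cons_induction with
  | empty =>
    simp only [Finset.sum_empty, zero_mul]
    have hc : (0 : Finset (Fin k → ℝ)).card ≤ 1 := by
      have : (0 : Finset (Fin k → ℝ)) = {0} := rfl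
      rw [this, Finset.card_singleton]
    exact le_of_eq ((hzero 0).2 hc)
  | cons a s ha ih =>
    rw [Finset.sum_cons, Finset.sum_cons, add_mul]
    have h1 : (w a • A).Nonempty := hA.smul_finset
    have h2 : (∑ b ∈ s, w b • A).Nonempty :=
      aux_sum_nonempty s _ fun i _ => hA.smul_finset
    calc δ (w a • A + ∑ b ∈ s, w b • A)
        ≤ δ (w a • A) + δ (∑ b ∈ s, w b • A) := hsub _ _ h1 h2
      _ ≤ w a * δ A + (∑ b ∈ s, w b) * δ A :=
          add_le_add (le_of_eq (hhom A (w a) hA (hw a (Finset.mem_cons_self a s))))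
            (ih fun b hb => hw b (Finset.mem_cons_of_mem hb))

include hzero hmono hhom hsub in
/-- Adding a point of the convex hull does not increase `δ`. -/
lemma aux_insert_le (A : Finset (Fin k → ℝ)) (hA : A.Nonempty) (x : (Fin k → ℝ))
    (hx : x ∈ convexHull ℝ (A : Set (Fin k → ℝ))) : δ (insert x A) ≤ δ A := by
  classical
  rw [Finset.convexHull_eq] at hx
  obtain ⟨w, hw0, hw1, hwx⟩ := hx
  rw [Finset.centerMass_eq_of_sum_1 _ _ hw1] at hwx
  simp only [id] at hwx
  have hsub' : insert x A ⊆ ∑ a ∈ A, w a • A := by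
    intro b hb
    rcases Finset.mem_insert.1 hb with rfl | hb
    · rw [← hwx]
      exact aux_mem_sum A _ _ fun a ha => Finset.smul_mem_smul_finset ha
    · have : b = ∑ a ∈ A, w a • b := by
        rw [← Finset.sum_smul, hw1, one_smul]
      rw [this]
      exact aux_mem_sum A _ _ fun a _ => Finset.smul_mem_smul_finset hb
  calc δ (insert x A) ≤ δ (∑ a ∈ A, w a • A) := hmono _ _ hsub'
    _ ≤ (∑ a ∈ A, w a) * δ A := aux_delta_sum_le δ hzero hhom hsub A hA A w hw0
    _ = δ A := by rw [hw1, one_mul]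

include hzero hmono hhom hsub in
lemma aux_union_le (A : Finset (Fin k → ℝ)) (hA : A.Nonempty) (B : Finset (Fin k → ℝ))
    (hB : (B : Set (Fin k → ℝ)) ⊆ convexHull ℝ (A : Set (Fin k → ℝ))) : δ (B ∪ A) ≤ δ A := by
  classical
  induction B using Finset.induction_on with
  | empty => simpa using le_refl (δ A)
  | @insert x B hx ih =>
    have hxA : x ∈ convexHull ℝ (A : Set (Fin k → ℝ)) := hB (by simp)
    have hx' : x ∈ convexHull ℝ ((B ∪ A : Finset (Fin k → ℝ)) : Set (Fin k → ℝ)) := by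
      refine convexHull_mono ?_ hxA
      intro y hy
      simp only [Finset.coe_union, Set.mem_union]
      exact Or.inr hy
    have hBA : (B ∪ A).Nonempty := Finset.Nonempty.inr hA
    have h1 : insert x B ∪ A = insert x (B ∪ A) := by
      ext y; simp [or_assoc]
    rw [h1]
    calc δ (insert x (B ∪ A)) ≤ δ (B ∪ A) :=
          aux_insert_le δ hzero hmono hhom hsub _ hBA x hx'
      _ ≤ δ A := ih (fun y hy => hB (by simp [Finset.mem_coe.1 hy]))

end Aux

theorem stmt_12 {k : ℕ} (δ : Finset (Fin k → ℝ) → ℝ)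
    (hnn : ∀ A : Finset (Fin k → ℝ), 0 ≤ δ A)
    (hzero : ∀ A : Finset (Fin k → ℝ), δ A = 0 ↔ A.card ≤ 1)
    (hmono : ∀ A B : Finset (Fin k → ℝ), A ⊆ B → δ A ≤ δ B)
    (hhom : ∀ (A : Finset (Fin k → ℝ)) (lam : ℝ), A.Nonempty → 0 ≤ lam →
      δ (lam • A) = lam * δ A)
    (hsub : ∀ A B : Finset (Fin k → ℝ), A.Nonempty → B.Nonempty →
      δ (A + B) ≤ δ A + δ B) :
    ∀ A B : Finset (Fin k → ℝ),
      convexHull ℝ (A : Set (Fin k → ℝ)) = convexHull ℝ (B : Set (Fin k → ℝ)) →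
      δ A = δ B := by
  intro A B h
  rcases A.eq_empty_or_nonempty with rfl | hA
  · rcases B.eq_empty_or_nonempty with rfl | hB
    · rfl
    · exfalso
      have : (B : Set (Fin k → ℝ)).Nonempty := Finset.coe_nonempty.2 hB
      have h2 : (convexHull ℝ (B : Set (Fin k → ℝ))).Nonempty :=
        this.mono (subset_convexHull ℝ _)
      rw [← h] at h2
      simp at h2
  · rcases B.eq_empty_or_nonempty with rfl | hB
    · exfalso
      have : (A : Set (Fin k → ℝ)).Nonempty := Finset.coe_nonempty.2 hA
      have h2 : (convexHull ℝ (A : Set (Fin k → ℝ))).Nonempty :=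
        this.mono (subset_convexHull ℝ _)
      rw [h] at h2
      simp at h2
    · have hBA : (B : Set (Fin k → ℝ)) ⊆ convexHull ℝ (A : Set (Fin k → ℝ)) := by
        rw [h]; exact subset_convexHull ℝ _
      have hAB : (A : Set (Fin k → ℝ)) ⊆ convexHull ℝ (B : Set (Fin k → ℝ)) := by
        rw [← h]; exact subset_convexHull ℝ _
      have h1 : δ B ≤ δ A :=
        le_trans (hmono B (B ∪ A) Finset.subset_union_left)
          (aux_union_le δ hzero hmono hhom hsub A hA B hBA)
      have h2 : δ A ≤ δ B :=
        le_trans (hmono A (A ∪ B) Finset.subset_union_left)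
          (aux_union_le δ hzero hmono hhom hsub B hB A hAB)
      exact le_antisymm h2 h1
end

section
/- Let (ℝ^k, δ) be a sublinear semidiversity and define δ*(K) = sup{δ(A) : A ⊆ K finite} for bounded K ⊆ ℝ^k. Then for any finite A ⊆ ℝ^k, δ*(conv(A)) = δ(A). -/
open Pointwise

theorem stmt_13 {k : ℕ} (δ : Finset (Fin k → ℝ) → ℝ)
    (hnn : ∀ A : Finset (Fin k → ℝ), 0 ≤ δ A)
    (hzero : ∀ A : Finset (Fin k → ℝ), A.card ≤ 1 → δ A = 0)
    (hmono : ∀ A B : Finset (Fin k → ℝ), A ⊆ B → δ A ≤ δ B)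
    (hhom : ∀ (A : Finset (Fin k → ℝ)) (lam : ℝ), A.Nonempty → 0 ≤ lam →
      δ (lam • A) = lam * δ A)
    (hsub : ∀ A B : Finset (Fin k → ℝ), A.Nonempty → B.Nonempty →
      δ (A + B) ≤ δ A + δ B) :
    ∀ A : Finset (Fin k → ℝ),
      sSup {r : ℝ | ∃ B : Finset (Fin k → ℝ),
        (B : Set (Fin k → ℝ)) ⊆ convexHull ℝ (A : Set (Fin k → ℝ)) ∧ r = δ B} = δ A := by
  classical
  intro A
  -- membership in a finite Minkowski sum
  have memsum : ∀ (s : Finset (Fin k → ℝ)) (C : (Fin k → ℝ) → Finset (Fin k → ℝ))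
      (f : (Fin k → ℝ) → (Fin k → ℝ)),
      (∀ a ∈ s, f a ∈ C a) → (∑ a ∈ s, f a) ∈ ∑ a ∈ s, C a := by
    intro s
    refine Finset.induction_on s ?_ ?_
    · intro C f _; simp [Finset.mem_zero]
    · intro x s' hx ih C f hf
      rw [Finset.sum_insert hx, Finset.sum_insert hx]
      exact Finset.add_mem_add (hf x (Finset.mem_insert_self _ _))
        (ih C f fun a ha => hf a (Finset.mem_insert_of_mem ha))
  -- nonemptiness of a finite Minkowski sum
  have nesum : ∀ (s : Finset (Fin k → ℝ)) (C : (Fin k → ℝ) → Finset (Fin k → ℝ)),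
      (∀ a ∈ s, (C a).Nonempty) → (∑ a ∈ s, C a).Nonempty := by
    intro s
    refine Finset.induction_on s ?_ ?_
    · intro C _; exact ⟨0, by simp [Finset.mem_zero]⟩
    · intro x s' hx ih C hC
      rw [Finset.sum_insert hx]
      exact (hC x (Finset.mem_insert_self _ _)).add
        (ih C fun a ha => hC a (Finset.mem_insert_of_mem ha))
  -- subadditivity over finite Minkowski sums
  have subsum : ∀ (s : Finset (Fin k → ℝ)) (C : (Fin k → ℝ) → Finset (Fin k → ℝ)),
      (∀ a ∈ s, (C a).Nonempty) → s.Nonempty →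
      δ (∑ a ∈ s, C a) ≤ ∑ a ∈ s, δ (C a) := by
    intro s
    refine Finset.induction_on s ?_ ?_
    · intro C _ hne; exact absurd hne (by simp)
    · intro x s' hx ih C hC _
      rw [Finset.sum_insert hx, Finset.sum_insert hx]
      rcases s'.eq_empty_or_nonempty with rfl | hs'
      · simp
      · calc δ (C x + ∑ a ∈ s', C a)
            ≤ δ (C x) + δ (∑ a ∈ s', C a) :=
              hsub _ _ (hC x (Finset.mem_insert_self _ _))
                (nesum s' C fun a ha => hC a (Finset.mem_insert_of_mem ha))
          _ ≤ δ (C x) + ∑ a ∈ s', δ (C a) := by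
              gcongr
              exact ih C (fun a ha => hC a (Finset.mem_insert_of_mem ha)) hs'
  -- key step: adding one point of the convex hull does not increase δ
  have step : ∀ (b : Fin k → ℝ) (A' : Finset (Fin k → ℝ)), A ⊆ A' →
      b ∈ convexHull ℝ (A : Set (Fin k → ℝ)) → δ (insert b A') ≤ δ A' := by
    intro b A' hAA' hb
    have hAne : A.Nonempty := by
      by_contra h
      rw [Finset.not_nonempty_iff_eq_empty] at h
      simp [h] at hb
    have hA'ne : A'.Nonempty := hAne.mono hAA'
    rw [Finset.convexHull_eq] at hb
    obtain ⟨w, hw0, hw1, hwb⟩ := hb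
    have hbeq : b = ∑ a ∈ A, w a • a := by
      rw [← hwb, Finset.centerMass_eq_of_sum_1 _ _ hw1]; rfl
    have hsub1 : insert b A' ⊆ ∑ a ∈ A, w a • A' := by
      intro x hx
      rcases Finset.mem_insert.1 hx with rfl | hx
      · rw [hbeq]
        exact memsum A _ _ fun a ha => Finset.smul_mem_smul_finset (hAA' ha)
      · have hxeq : x = ∑ a ∈ A, w a • x := by
          rw [← Finset.sum_smul, hw1, one_smul]
        rw [hxeq]
        exact memsum A _ _ fun a _ => Finset.smul_mem_smul_finset hx
    calc δ (insert b A') ≤ δ (∑ a ∈ A, w a • A') := hmono _ _ hsub1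
      _ ≤ ∑ a ∈ A, δ (w a • A') :=
          subsum A _ (fun a _ => hA'ne.smul_finset) hAne
      _ = ∑ a ∈ A, w a * δ A' :=
          Finset.sum_congr rfl fun a ha => hhom _ _ hA'ne (hw0 a ha)
      _ = δ A' := by rw [← Finset.sum_mul, hw1, one_mul]
  -- main bound
  have key : ∀ B : Finset (Fin k → ℝ),
      (B : Set (Fin k → ℝ)) ⊆ convexHull ℝ (A : Set (Fin k → ℝ)) → δ B ≤ δ A := by
    have key' : ∀ B : Finset (Fin k → ℝ),
        (B : Set (Fin k → ℝ)) ⊆ convexHull ℝ (A : Set (Fin k → ℝ)) →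
        δ (A ∪ B) ≤ δ A := by
      intro B
      refine Finset.induction_on B ?_ ?_
      · intro _; simp
      · intro x s' hx ih hsub'
        have h1 : A ∪ insert x s' = insert x (A ∪ s') := by
          ext y; simp [Finset.mem_union, Finset.mem_insert, or_left_comm]
        rw [h1]
        calc δ (insert x (A ∪ s'))
            ≤ δ (A ∪ s') := step x (A ∪ s') Finset.subset_union_left
              (hsub' (by simp))
          _ ≤ δ A := ih (fun y hy => hsub' (by simp; right; exact hy))
    intro B hB
    exact le_trans (hmono _ _ Finset.subset_union_right) (key' B hB)
  -- conclude
  have hmem : δ A ∈ {r : ℝ | ∃ B : Finset (Fin k → ℝ),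
      (B : Set (Fin k → ℝ)) ⊆ convexHull ℝ (A : Set (Fin k → ℝ)) ∧ r = δ B} :=
    ⟨A, subset_convexHull ℝ _, rfl⟩
  apply le_antisymm
  · apply csSup_le ⟨δ A, hmem⟩
    rintro r ⟨B, hB, rfl⟩
    exact key B hB
  · apply le_csSup ⟨δ A, ?_⟩ hmem
    rintro r ⟨B, hB, rfl⟩
    exact key B hB
end

section
/- Let ν be a positive finite Borel measure on the unit sphere S^{k-1} ⊆ ℝ^k with ∫_{S^{k-1}} x dν(x) = 0, and define δ(A) = ∫_{S^{k-1}} h_A(x) dν(x) for nonempty finite A ⊆ ℝ^k (δ(∅)=0), where h_A(x) = max_{a ∈ A} a·x. Then (ℝ^k, δ) is a linear semidiversity: δ is non-negative, δ(A)=0 for |A|≤1, monotone, satisfies the diversity triangle inequality with nonempty middle set, and δ(λA)=λδ(A), δ(A+B) = δ(A)+δ(B) for λ ≥ 0 and nonempty finite A, B. -/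
open Pointwise MeasureTheory
open scoped Classical RealInnerProductSpace

noncomputable def sphereLinDiv {k : ℕ}
    (ν : Measure (Metric.sphere (0 : EuclideanSpace ℝ (Fin k)) 1))
    (A : Finset (EuclideanSpace ℝ (Fin k))) : ℝ :=
  if h : A.Nonempty then
    ∫ x, A.sup' h (fun a => ⟪a, (x : EuclideanSpace ℝ (Fin k))⟫) ∂ν
  else 0

/-
Pointwise, the support function `h_A x = max_{a ∈ A} ⟪a, x⟫` is monotone in `A`, positively
homogeneous, additive under Minkowski sums, and satisfies
`h_{A ∪ C} + h_B ≤ h_{A ∪ B} + h_{B ∪ C}` when `B` is nonempty (each `c ∈ A ∪ C` lies in one of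
`A ∪ B`, `B ∪ C`, and `B` lies in the other). Integrating against `ν` preserves all of this.
Centring makes `∫ ⟪a, x⟫ dν = 0`, so `δ {a} = 0`, and `h_A ≥ ⟪a, ·⟫` for `a ∈ A` gives `δ A ≥ 0`.
-/

namespace Finset

variable {E : Type*} [NormedAddCommGroup E] [InnerProductSpace ℝ E]

noncomputable def supportFun (A : Finset E) (hA : A.Nonempty) (x : E) : ℝ :=
  A.sup' hA (⟪·, x⟫)

lemma inner_le_supportFun {A : Finset E} (hA : A.Nonempty) {a : E} (ha : a ∈ A) (x : E) :
    ⟪a, x⟫ ≤ A.supportFun hA x :=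
  le_sup' (⟪·, x⟫) ha

lemma supportFun_singleton (a x : E) :
    ({a} : Finset E).supportFun (singleton_nonempty a) x = ⟪a, x⟫ :=
  sup'_singleton _

lemma supportFun_mono {A B : Finset E} (hA : A.Nonempty) (hB : B.Nonempty) (hAB : A ⊆ B) (x : E) :
    A.supportFun hA x ≤ B.supportFun hB x :=
  sup'_mono _ hAB hA

lemma supportFun_union_add_le [DecidableEq E] {A B C : Finset E} (hAC : (A ∪ C).Nonempty)
    (hB : B.Nonempty) (x : E) :
    (A ∪ C).supportFun hAC x + B.supportFun hB x ≤
      (A ∪ B).supportFun (hB.mono subset_union_right) x +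
        (B ∪ C).supportFun (hB.mono subset_union_left) x := by
  rw [← le_sub_iff_add_le]
  refine sup'_le _ _ fun c hc => ?_
  have hB_AB := supportFun_mono hB (hB.mono subset_union_right) (subset_union_right (s₁ := A)) x
  have hB_BC := supportFun_mono hB (hB.mono subset_union_left) (subset_union_left (s₂ := C)) x
  rcases mem_union.1 hc with hcA | hcC
  · linarith [inner_le_supportFun (hB.mono subset_union_right) (mem_union_left B hcA) x]
  · linarith [inner_le_supportFun (hB.mono subset_union_left) (mem_union_right B hcC) x]

lemma supportFun_smul [DecidableEq E] {A : Finset E} (hA : A.Nonempty) {c : ℝ} (hc : 0 ≤ c)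
    (x : E) :
    (c • A).supportFun hA.smul_finset x = c * A.supportFun hA x := by
  simp only [supportFun, smul_finset_def, sup'_image, mul₀_sup' hc]
  simp [real_inner_smul_left]

lemma supportFun_add [DecidableEq E] {A B : Finset E} (hA : A.Nonempty) (hB : B.Nonempty) (x : E) :
    (A + B).supportFun (hA.add hB) x = A.supportFun hA x + B.supportFun hB x := by
  simp only [supportFun, add_def, sup'_image, sup'_product_left, Function.comp_def, inner_add_left,
    ← add_sup', ← sup'_add]

lemma integrable_supportFun {X : Type*} [MeasurableSpace X] {μ : Measure X} {v : X → E}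
    (hv : Integrable v μ) (A : Finset E) (hA : A.Nonempty) :
    Integrable (fun x => A.supportFun hA (v x)) μ := by
  have hsup : (fun x => A.supportFun hA (v x)) = A.sup' hA fun a x => ⟪a, v x⟫ := by
    ext x; simp [supportFun, Finset.sup'_apply]
  rw [hsup]
  exact sup'_induction (p := (Integrable · μ)) hA _ (fun _ hf _ hg => hf.sup hg)
    fun a _ => hv.const_inner a

end Finset

lemma integrable_coe_sphere {E : Type*} [NormedAddCommGroup E] [MeasurableSpace E]
    [OpensMeasurableSpace E] [SecondCountableTopology E] {r : ℝ}
    (μ : Measure (Metric.sphere (0 : E) r)) [IsFiniteMeasure μ] :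
    Integrable (fun x : Metric.sphere (0 : E) r => (x : E)) μ :=
  .of_bound continuous_subtype_val.aestronglyMeasurable r
    (ae_of_all _ fun x => (norm_eq_of_mem_sphere x).le)

section sphereLinDiv

open Finset

variable {k : ℕ} {ν : Measure (Metric.sphere (0 : EuclideanSpace ℝ (Fin k)) 1)}

lemma sphereLinDiv_empty : sphereLinDiv ν ∅ = 0 :=
  dif_neg Finset.not_nonempty_empty

lemma sphereLinDiv_of_nonempty {A : Finset (EuclideanSpace ℝ (Fin k))} (hA : A.Nonempty) :
    sphereLinDiv ν A = ∫ x, A.supportFun hA x ∂ν :=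
  dif_pos hA

lemma sphereLinDiv_smul {A : Finset (EuclideanSpace ℝ (Fin k))} (hA : A.Nonempty) {c : ℝ}
    (hc : 0 ≤ c) : sphereLinDiv ν (c • A) = c * sphereLinDiv ν A := by
  simp only [sphereLinDiv_of_nonempty hA, sphereLinDiv_of_nonempty hA.smul_finset,
    supportFun_smul hA hc, integral_const_mul]

variable [IsFiniteMeasure ν]

lemma integrable_supportFun_sphere {A : Finset (EuclideanSpace ℝ (Fin k))} (hA : A.Nonempty) :
    Integrable (fun x : Metric.sphere (0 : EuclideanSpace ℝ (Fin k)) 1 => A.supportFun hA x) ν :=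
  integrable_supportFun (integrable_coe_sphere ν) A hA

lemma integral_inner_eq_zero_of_centered (hcent : ∫ x, (x : EuclideanSpace ℝ (Fin k)) ∂ν = 0)
    (a : EuclideanSpace ℝ (Fin k)) : ∫ x, ⟪a, (x : EuclideanSpace ℝ (Fin k))⟫ ∂ν = 0 := by
  rw [integral_inner (integrable_coe_sphere ν), hcent, inner_zero_right]

lemma sphereLinDiv_singleton (hcent : ∫ x, (x : EuclideanSpace ℝ (Fin k)) ∂ν = 0)
    (a : EuclideanSpace ℝ (Fin k)) : sphereLinDiv ν {a} = 0 := by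
  simp only [sphereLinDiv_of_nonempty (singleton_nonempty a), supportFun_singleton,
    integral_inner_eq_zero_of_centered hcent]

lemma sphereLinDiv_of_card_le_one (hcent : ∫ x, (x : EuclideanSpace ℝ (Fin k)) ∂ν = 0)
    {A : Finset (EuclideanSpace ℝ (Fin k))} (hA : A.card ≤ 1) : sphereLinDiv ν A = 0 := by
  obtain ⟨a, hAa⟩ := card_le_one_iff_subset_singleton.1 hA
  rcases subset_singleton_iff.1 hAa with rfl | rfl
  exacts [sphereLinDiv_empty, sphereLinDiv_singleton hcent a]

lemma sphereLinDiv_nonneg (hcent : ∫ x, (x : EuclideanSpace ℝ (Fin k)) ∂ν = 0)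
    (A : Finset (EuclideanSpace ℝ (Fin k))) : 0 ≤ sphereLinDiv ν A := by
  rcases A.eq_empty_or_nonempty with rfl | hA
  · exact sphereLinDiv_empty.ge
  have ⟨a, ha⟩ := hA
  rw [sphereLinDiv_of_nonempty hA, ← integral_inner_eq_zero_of_centered hcent a]
  exact integral_mono ((integrable_coe_sphere ν).const_inner a) (integrable_supportFun_sphere hA)
    fun x => inner_le_supportFun hA ha x

lemma sphereLinDiv_mono (hcent : ∫ x, (x : EuclideanSpace ℝ (Fin k)) ∂ν = 0)
    {A B : Finset (EuclideanSpace ℝ (Fin k))} (hAB : A ⊆ B) :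
    sphereLinDiv ν A ≤ sphereLinDiv ν B := by
  rcases A.eq_empty_or_nonempty with rfl | hA
  · exact sphereLinDiv_empty.trans_le (sphereLinDiv_nonneg hcent B)
  have hB := hA.mono hAB
  rw [sphereLinDiv_of_nonempty hA, sphereLinDiv_of_nonempty hB]
  exact integral_mono (integrable_supportFun_sphere hA) (integrable_supportFun_sphere hB)
    fun x => supportFun_mono hA hB hAB x

lemma sphereLinDiv_union_le (hcent : ∫ x, (x : EuclideanSpace ℝ (Fin k)) ∂ν = 0)
    {A B C : Finset (EuclideanSpace ℝ (Fin k))} (hB : B.Nonempty) :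
    sphereLinDiv ν (A ∪ C) ≤ sphereLinDiv ν (A ∪ B) + sphereLinDiv ν (B ∪ C) := by
  have hAB := hB.mono (subset_union_right (s₁ := A))
  have hBC := hB.mono (subset_union_left (s₂ := C))
  rcases (A ∪ C).eq_empty_or_nonempty with hAC | hAC
  · rw [hAC, sphereLinDiv_empty]
    exact add_nonneg (sphereLinDiv_nonneg hcent _) (sphereLinDiv_nonneg hcent _)
  calc sphereLinDiv ν (A ∪ C)
      ≤ sphereLinDiv ν (A ∪ C) + sphereLinDiv ν B :=
        le_add_of_nonneg_right (sphereLinDiv_nonneg hcent B)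
    _ = ∫ x, (A ∪ C).supportFun hAC x + B.supportFun hB x ∂ν := by
        rw [sphereLinDiv_of_nonempty hAC, sphereLinDiv_of_nonempty hB,
          ← integral_add (integrable_supportFun_sphere hAC) (integrable_supportFun_sphere hB)]
    _ ≤ ∫ x, (A ∪ B).supportFun hAB x + (B ∪ C).supportFun hBC x ∂ν :=
        integral_mono ((integrable_supportFun_sphere hAC).add (integrable_supportFun_sphere hB))
          ((integrable_supportFun_sphere hAB).add (integrable_supportFun_sphere hBC))
          fun x => supportFun_union_add_le hAC hB x
    _ = sphereLinDiv ν (A ∪ B) + sphereLinDiv ν (B ∪ C) := by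
        rw [sphereLinDiv_of_nonempty hAB, sphereLinDiv_of_nonempty hBC,
          ← integral_add (integrable_supportFun_sphere hAB) (integrable_supportFun_sphere hBC)]

lemma sphereLinDiv_add {A B : Finset (EuclideanSpace ℝ (Fin k))} (hA : A.Nonempty)
    (hB : B.Nonempty) : sphereLinDiv ν (A + B) = sphereLinDiv ν A + sphereLinDiv ν B := by
  simp only [sphereLinDiv_of_nonempty hA, sphereLinDiv_of_nonempty hB,
    sphereLinDiv_of_nonempty (hA.add hB), supportFun_add hA hB]
  exact integral_add (integrable_supportFun_sphere hA) (integrable_supportFun_sphere hB)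

end sphereLinDiv

theorem stmt_15 {k : ℕ}
    (ν : Measure (Metric.sphere (0 : EuclideanSpace ℝ (Fin k)) 1))
    [IsFiniteMeasure ν]
    (hcent : ∫ x, (x : EuclideanSpace ℝ (Fin k)) ∂ν = 0) :
    (∀ A, 0 ≤ sphereLinDiv ν A) ∧
    (∀ A : Finset (EuclideanSpace ℝ (Fin k)), A.card ≤ 1 → sphereLinDiv ν A = 0) ∧
    (∀ A B : Finset (EuclideanSpace ℝ (Fin k)), A ⊆ B → sphereLinDiv ν A ≤ sphereLinDiv ν B) ∧
    (∀ A B C : Finset (EuclideanSpace ℝ (Fin k)), B.Nonempty →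
      sphereLinDiv ν (A ∪ C) ≤ sphereLinDiv ν (A ∪ B) + sphereLinDiv ν (B ∪ C)) ∧
    (∀ (A : Finset (EuclideanSpace ℝ (Fin k))) (lam : ℝ), A.Nonempty → 0 ≤ lam →
      sphereLinDiv ν (lam • A) = lam * sphereLinDiv ν A) ∧
    (∀ A B : Finset (EuclideanSpace ℝ (Fin k)), A.Nonempty → B.Nonempty →
      sphereLinDiv ν (A + B) = sphereLinDiv ν A + sphereLinDiv ν B) :=
  ⟨sphereLinDiv_nonneg hcent, fun _ => sphereLinDiv_of_card_le_one hcent,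
    fun _ _ => sphereLinDiv_mono hcent, fun _ _ _ => sphereLinDiv_union_le hcent,
    fun _ _ hA hc => sphereLinDiv_smul hA hc, fun _ _ => sphereLinDiv_add⟩
end

section
/- Let v_0,…,v_j ∈ ℝ^k be affinely independent with Σ_ℓ c_ℓ v_ℓ = 0 for some c_ℓ ≥ 0 with Σ_ℓ c_ℓ = 1. Let K = {y ∈ ℝ^k : v_ℓ·y ≤ 1 for all ℓ} and δ_K(A) = inf{λ ≥ 0 : A ⊆ λK + x for some x ∈ ℝ^k}. Then for every nonempty finite A ⊆ ℝ^k, δ_K(A) = Σ_{ℓ=0}^j c_ℓ h_A(v_ℓ), where h_A(v) = max_{a∈A} a·v. -/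
/-! The support numbers `h_A(v_i)` of `A` bound the dilations of `K` covering `A`: if
`A ⊆ μK + x` then `h_A(v_i) ≤ μ + ⟪v_i, x⟫`, and averaging with the weights `c_i` kills the
translation term because `∑ c_i v_i = 0`, giving `∑ c_i h_A(v_i) ≤ μ`. Conversely, affine
independence makes `c` span the linear relations among the `v_i`, so the functionals `⟪v_i, ·⟫`
jointly attain every vector orthogonal to `c`. Hence a translation `x` with
`⟪v_i, x⟫ = h_A(v_i) - ∑ c_l h_A(v_l)` exists, and then `A ⊆ μK + x` for every
`μ > ∑ c_l h_A(v_l)`. -/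

open scoped RealInnerProductSpace

section

variable {ι : Type*} [Fintype ι]

lemma AffineIndependent.eq_sum_smul_of_sum_smul_eq_zero {k V : Type*} [Ring k] [AddCommGroup V]
    [Module k V] {v : ι → V} (hv : AffineIndependent k v) {c d : ι → k} (hc1 : ∑ i, c i = 1)
    (hc0 : ∑ i, c i • v i = 0) (hd : ∑ i, d i • v i = 0) : d = (∑ i, d i) • c := by
  funext i
  refine hv.eq_of_sum_eq_sum (s := Finset.univ) ?_ ?_ i (Finset.mem_univ i)
  · simp [← Finset.mul_sum, hc1]
  · simp only [Pi.smul_apply, smul_eq_mul, ← smul_smul, ← Finset.smul_sum, hc0, hd, smul_zero]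

variable {E : Type*} [NormedAddCommGroup E] [InnerProductSpace ℝ E]

lemma exists_inner_eq_of_forall_eq_smul {v : ι → E} {c : ι → ℝ}
    (hker : ∀ d : ι → ℝ, ∑ i, d i • v i = 0 → ∃ t : ℝ, d = t • c)
    {b : ι → ℝ} (hb : ∑ i, c i * b i = 0) : ∃ x : E, ∀ i, ⟪v i, x⟫ = b i := by
  let T : E →ₗ[ℝ] EuclideanSpace ℝ ι :=
    { toFun := fun x => WithLp.toLp 2 fun i => ⟪v i, x⟫
      map_add' := fun x y => by ext i; simp [inner_add_right]
      map_smul' := fun r x => by ext i; simp [inner_smul_right] }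
  suffices hmem : WithLp.toLp 2 b ∈ LinearMap.range T by
    obtain ⟨x, hx⟩ := hmem
    exact ⟨x, fun i => congrFun (congrArg WithLp.ofLp hx) i⟩
  rw [← Submodule.orthogonal_orthogonal (LinearMap.range T), Submodule.mem_orthogonal]
  rintro d hd
  have hT : ∀ x, ⟪∑ i, d i • v i, x⟫ = ⟪T x, d⟫ := fun x => by
    simp [T, sum_inner, real_inner_smul_left, PiLp.inner_apply, mul_comm]
  have hrel : ∑ i, d i • v i = 0 :=
    inner_self_eq_zero.mp ((hT _).trans (hd _ ⟨_, rfl⟩))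
  obtain ⟨t, ht⟩ := hker _ hrel
  simp [PiLp.inner_apply, ht, mul_assoc, ← Finset.mul_sum, mul_comm (b _), hb]

variable {v : ι → E} {c : ι → ℝ}

lemma sum_mul_inner_eq_zero (hc0 : ∑ i, c i • v i = 0) (x : E) :
    ∑ i, c i * ⟪v i, x⟫ = 0 := by
  simp [← real_inner_smul_left, ← sum_inner, hc0]

lemma sum_mul_sup'_inner_nonneg (hc : ∀ i, 0 ≤ c i) (hc0 : ∑ i, c i • v i = 0)
    {A : Finset E} (hA : A.Nonempty) : 0 ≤ ∑ i, c i * A.sup' hA (fun a => ⟪a, v i⟫) := by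
  obtain ⟨a, ha⟩ := hA
  calc (0 : ℝ) = ∑ i, c i * ⟪v i, a⟫ := (sum_mul_inner_eq_zero hc0 a).symm
    _ ≤ _ := Finset.sum_le_sum fun i _ => mul_le_mul_of_nonneg_left
        (real_inner_comm a (v i) ▸ Finset.le_sup' (fun a => ⟪a, v i⟫) ha) (hc i)

lemma sum_mul_sup'_inner_le_of_subset (hc : ∀ i, 0 ≤ c i) (hc1 : ∑ i, c i = 1)
    (hc0 : ∑ i, c i • v i = 0) {A : Finset E} (hA : A.Nonempty) {μ : ℝ} (hμ : 0 ≤ μ) {x : E}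
    (hAx : (A : Set E) ⊆ (fun y => μ • y + x) '' {y | ∀ i, ⟪v i, y⟫ ≤ 1}) :
    ∑ i, c i * A.sup' hA (fun a => ⟪a, v i⟫) ≤ μ := by
  have hsup : ∀ i, A.sup' hA (fun a => ⟪a, v i⟫) ≤ μ + ⟪v i, x⟫ := fun i =>
    Finset.sup'_le _ _ fun a ha => by
      obtain ⟨y, hy, rfl⟩ := hAx ha
      rw [real_inner_comm, inner_add_right, real_inner_smul_right]
      nlinarith [hy i]
  calc ∑ i, c i * A.sup' hA (fun a => ⟪a, v i⟫) ≤ ∑ i, c i * (μ + ⟪v i, x⟫) :=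
        Finset.sum_le_sum fun i _ => mul_le_mul_of_nonneg_left (hsup i) (hc i)
    _ = μ := by
        simp only [mul_add, Finset.sum_add_distrib, ← Finset.sum_mul, hc1, one_mul,
          sum_mul_inner_eq_zero hc0, add_zero]

lemma exists_subset_of_sum_mul_sup'_inner_lt (hv : AffineIndependent ℝ v) (hc : ∀ i, 0 ≤ c i)
    (hc1 : ∑ i, c i = 1) (hc0 : ∑ i, c i • v i = 0) {A : Finset E} (hA : A.Nonempty) {μ : ℝ}
    (hμ : ∑ i, c i * A.sup' hA (fun a => ⟪a, v i⟫) < μ) :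
    ∃ x : E, (A : Set E) ⊆ (fun y => μ • y + x) '' {y | ∀ i, ⟪v i, y⟫ ≤ 1} := by
  set h : ι → ℝ := fun i => A.sup' hA (fun a => ⟪a, v i⟫)
  set lam := ∑ i, c i * h i
  have hμpos : 0 < μ := (sum_mul_sup'_inner_nonneg hc hc0 hA).trans_lt hμ
  have hker : ∀ d : ι → ℝ, ∑ i, d i • v i = 0 → ∃ t : ℝ, d = t • c := fun d hd =>
    ⟨_, hv.eq_sum_smul_of_sum_smul_eq_zero hc1 hc0 hd⟩
  have hb : ∑ i, c i * (h i - lam) = 0 := by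
    simp only [mul_sub, Finset.sum_sub_distrib, ← Finset.sum_mul, hc1, one_mul, lam, sub_self]
  obtain ⟨x, hx⟩ := exists_inner_eq_of_forall_eq_smul hker hb
  refine ⟨x, fun a ha => ⟨μ⁻¹ • (a - x), fun i => ?_, ?_⟩⟩
  · have hai : ⟪v i, a⟫ ≤ h i := real_inner_comm a (v i) ▸ Finset.le_sup' (fun a => ⟪a, v i⟫) ha
    rw [real_inner_smul_right, inner_sub_right, hx i, inv_mul_le_iff₀ hμpos]
    linarith
  · simp [smul_smul, mul_inv_cancel₀ hμpos.ne']

end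

theorem stmt_16 {k j : ℕ} (v : Fin (j + 1) → EuclideanSpace ℝ (Fin k))
    (hv : AffineIndependent ℝ v)
    (c : Fin (j + 1) → ℝ) (hc : ∀ l, 0 ≤ c l) (hc1 : ∑ l, c l = 1)
    (hc0 : ∑ l, c l • v l = 0)
    (K : Set (EuclideanSpace ℝ (Fin k)))
    (hK : K = {y | ∀ l, ⟪v l, y⟫ ≤ 1})
    (A : Finset (EuclideanSpace ℝ (Fin k))) (hA : A.Nonempty) :
    sInf {lam : ℝ | 0 ≤ lam ∧ ∃ x : EuclideanSpace ℝ (Fin k),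
        (A : Set (EuclideanSpace ℝ (Fin k))) ⊆ (fun y => lam • y + x) '' K} =
      ∑ l, c l * A.sup' hA (fun a => ⟪a, v l⟫) := by
  subst hK
  set lam := ∑ l, c l * A.sup' hA (fun a => ⟪a, v l⟫)
  have hlam : 0 ≤ lam := sum_mul_sup'_inner_nonneg hc hc0 hA
  have hmem : ∀ μ, lam < μ → 0 ≤ μ ∧ ∃ x : EuclideanSpace ℝ (Fin k),
      (A : Set _) ⊆ (fun y => μ • y + x) '' {y | ∀ l, ⟪v l, y⟫ ≤ 1} := fun μ hμ =>
    ⟨hlam.trans hμ.le, exists_subset_of_sum_mul_sup'_inner_lt hv hc hc1 hc0 hA hμ⟩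
  refine csInf_eq_of_forall_ge_of_forall_gt_exists_lt ⟨_, hmem (lam + 1) (by linarith)⟩ ?_ ?_
  · rintro μ ⟨hμ, x, hAx⟩
    exact sum_mul_sup'_inner_le_of_subset hc hc1 hc0 hA hμ hAx
  · intro w hw
    exact ⟨(lam + w) / 2, hmem _ (by linarith), by linarith⟩
end
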